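/- arXiv:1407.3343 — 2 statements merged into one kernel-verified Lean document; each statement's English description precedes it below -/
import Mathlib

section
/- Let K be a commutative ring and v, w : ℕ → K. Define A(n,k) by A(0,0)=1, A(0,n)=0 for n≥1, A(n,0)=∏_{i=0}^{n-1}(v_i + w_0), and A(n,k) = A(n-1,k-1) + (v_{n-1} + w_k)·A(n-1,k) for n,k ≥ 1. Then A(n,k) = ∑_{0 ≤ i_1 < i_2 < ... < i_{n-k} ≤ n-1} ∏_{j=1}^{n-k} (v_{i_j} + w_{i_j - j + 1}). -/
/-!
Both sides satisfy the recursion defining `A`. Write `S(m, n)` for the sum over strictly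
increasing `m`-tuples `i_0 < ⋯ < i_{m-1}` in `{0, …, n-1}` of `∏ j, c (i_j) j`. Splitting the
`(m+1)`-tuples in `{0, …, n}` according to whether `i_m = n` gives
`S(m+1, n+1) = S(m+1, n) + c n m * S(m, n)`; with `m = n - k` and `c i j = v i + w (i - j)`
this is the step `A(n+1, k+1) = A(n, k) + (v n + w (k+1)) A(n, k+1)`, and the boundary values
agree because `S(0, n) = 1` and `S(m, n) = 0` for `m > n`.
-/

open Finset

/-- The generalized two-weight array `A^{v,w}(n,k)`. -/
def A {K : Type*} [CommRing K] (v w : ℕ → K) : ℕ → ℕ → K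
  | 0, 0 => 1
  | 0, _ + 1 => 0
  | n + 1, 0 => (v n + w 0) * A v w n 0
  | n + 1, k + 1 => A v w n k + (v n + w (k + 1)) * A v w n (k + 1)

theorem Fin.strictMono_snoc_iff {α : Type*} [Preorder α] {n : ℕ} {f : Fin n → α} {x : α} :
    StrictMono (Fin.snoc f x : Fin (n + 1) → α) ↔ StrictMono f ∧ ∀ i, f i < x := by
  rw [← Fin.insertNth_last', Fin.strictMono_insertNth_iff]
  simp [Fin.castSucc_lt_last, (Fin.castSucc_lt_last _).not_ge]

section IncreasingSum

variable {K : Type*} [CommRing K] (c : ℕ → ℕ → K)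

def increasingMaps (m n : ℕ) : Finset (Fin m → Fin n) :=
  univ.filter fun f => ∀ a b : Fin m, a < b → f a < f b

@[simp]
theorem mem_increasingMaps {m n : ℕ} {f : Fin m → Fin n} :
    f ∈ increasingMaps m n ↔ StrictMono f := by
  simp [increasingMaps, StrictMono]

def increasingSum (m n : ℕ) : K :=
  ∑ f ∈ increasingMaps m n, ∏ j : Fin m, c (f j) j

@[simp]
theorem increasingSum_zero_left (n : ℕ) : increasingSum c 0 n = 1 := by
  simp [increasingSum, increasingMaps]

theorem increasingSum_eq_zero_of_lt {m n : ℕ} (h : n < m) : increasingSum c m n = 0 := by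
  refine sum_eq_zero fun f hf ↦ absurd h (not_lt.2 ?_)
  simpa using Fintype.card_le_of_injective f (mem_increasingMaps.1 hf).injective

theorem sum_increasingMaps_last_ne (m n : ℕ) :
    ∑ f ∈ (increasingMaps (m + 1) (n + 1)).filter (fun f ↦ ¬f (Fin.last m) = Fin.last n),
      ∏ j, c (f j) j = increasingSum c (m + 1) n := by
  have ne_last {f : Fin (m + 1) → Fin (n + 1)}
      (hf : f ∈ (increasingMaps (m + 1) (n + 1)).filter (fun f ↦ ¬f (Fin.last m) = Fin.last n))
      (j : Fin (m + 1)) : f j ≠ Fin.last n := by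
    simp only [mem_filter, mem_increasingMaps] at hf
    exact ((hf.1.monotone (Fin.le_last j)).trans_lt (Fin.lt_last_iff_ne_last.2 hf.2)).ne
  refine sum_bij' (fun f hf j ↦ (f j).castPred (ne_last hf j)) (fun g _ ↦ Fin.castSucc ∘ g)
    ?_ ?_ ?_ ?_ ?_
  · intro f hf
    have hf := mem_increasingMaps.1 (mem_filter.1 hf).1
    exact mem_increasingMaps.2 fun a b hab ↦ Fin.castPred_lt_castPred_iff.2 (hf hab)
  · intro g hg
    simp only [mem_filter, mem_increasingMaps] at hg ⊢
    exact ⟨Fin.strictMono_castSucc.comp hg, (Fin.castSucc_lt_last _).ne⟩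
  · intro f _
    funext j
    simp
  · intro g _
    funext j
    simp
  · intro f _
    simp

theorem sum_increasingMaps_last_eq (m n : ℕ) :
    ∑ f ∈ (increasingMaps (m + 1) (n + 1)).filter (fun f ↦ f (Fin.last m) = Fin.last n),
      ∏ j, c (f j) j = c n m * increasingSum c m n := by
  have ne_last {f : Fin (m + 1) → Fin (n + 1)}
      (hf : f ∈ (increasingMaps (m + 1) (n + 1)).filter (fun f ↦ f (Fin.last m) = Fin.last n))
      (j : Fin m) : f j.castSucc ≠ Fin.last n := by
    simp only [mem_filter, mem_increasingMaps] at hf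
    exact hf.2 ▸ (hf.1 (Fin.castSucc_lt_last j)).ne
  rw [increasingSum, mul_sum]
  refine sum_bij' (fun f hf j ↦ (f j.castSucc).castPred (ne_last hf j))
    (fun g _ ↦ Fin.snoc (Fin.castSucc ∘ g) (Fin.last n)) ?_ ?_ ?_ ?_ ?_
  · intro f hf
    have hf := mem_increasingMaps.1 (mem_filter.1 hf).1
    exact mem_increasingMaps.2 fun a b hab ↦
      Fin.castPred_lt_castPred_iff.2 (hf (Fin.castSucc_lt_castSucc_iff.2 hab))
  · intro g hg
    simp only [mem_filter, mem_increasingMaps, Fin.strictMono_snoc_iff, Fin.snoc_last] at hg ⊢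
    exact ⟨⟨Fin.strictMono_castSucc.comp hg, fun _ ↦ Fin.castSucc_lt_last _⟩, trivial⟩
  · intro f hf
    funext j
    refine Fin.lastCases ?_ (fun i ↦ ?_) j
    · simpa using (mem_filter.1 hf).2.symm
    · simp
  · intro g _
    funext j
    simp
  · intro f hf
    rw [Fin.prod_univ_castSucc, mul_comm]
    simp [(mem_filter.1 hf).2]

theorem increasingSum_succ_succ (m n : ℕ) :
    increasingSum c (m + 1) (n + 1) = increasingSum c (m + 1) n + c n m * increasingSum c m n := by
  rw [increasingSum, ← sum_filter_not_add_sum_filter _ (fun f ↦ f (Fin.last m) = Fin.last n),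
    sum_increasingMaps_last_ne, sum_increasingMaps_last_eq]

end IncreasingSum

theorem A_eq_zero_of_lt {K : Type*} [CommRing K] (v w : ℕ → K) :
    ∀ {n k : ℕ}, n < k → A v w n k = 0
  | 0, _ + 1, _ => rfl
  | _ + 1, _ + 1, h => by
    rw [A, A_eq_zero_of_lt v w (by omega), A_eq_zero_of_lt v w (by omega), mul_zero, add_zero]

theorem A_eq_increasingSum {K : Type*} [CommRing K] (v w : ℕ → K) :
    ∀ {n k : ℕ}, k ≤ n → A v w n k = increasingSum (fun i j ↦ v i + w (i - j)) (n - k) n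
  | 0, 0, _ => by simp [A]
  | n + 1, 0, _ => by
    rw [A, A_eq_increasingSum v w (Nat.zero_le n), Nat.sub_zero, Nat.sub_zero,
      increasingSum_succ_succ, increasingSum_eq_zero_of_lt _ (Nat.lt_succ_self n), Nat.sub_self]
    simp
  | n + 1, k + 1, hk => by
    obtain hlt | rfl := (Nat.succ_le_succ_iff.1 hk).lt_or_eq
    · obtain ⟨m, hm⟩ : ∃ m, n - k = m + 1 := ⟨n - k - 1, by omega⟩
      rw [A, A_eq_increasingSum v w hlt.le, A_eq_increasingSum v w hlt, Nat.add_sub_add_right, hm,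
        increasingSum_succ_succ, show n - (k + 1) = m by omega, show n - m = k + 1 by omega]
    · simp [A, A_eq_zero_of_lt v w (Nat.lt_succ_self _), A_eq_increasingSum v w (le_refl k)]

theorem stmt_0 {K : Type*} [CommRing K] (v w : ℕ → K) (n k : ℕ) (hk : k ≤ n) :
    A v w n k =
      ∑ f ∈ (Finset.univ : Finset (Fin (n - k) → Fin n)).filter
          (fun f => ∀ a b : Fin (n - k), a < b → f a < f b),
        ∏ j : Fin (n - k), (v (f j) + w ((f j : ℕ) - (j : ℕ))) :=
  A_eq_increasingSum v w hk
end

section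
/- Let K be a commutative ring, v, w : ℕ → K, and A^{v,w}(n,k) defined by the recurrence A^{v,w}(n,k) = A^{v,w}(n-1,k-1) + (v_{n-1}+w_k)·A^{v,w}(n-1,k) with standard initial conditions. Then the convolution formula A^{v,w}(l+m, n) = ∑_{k=0}^{n} A^{v,w}(l,k) · A^{v_{+l}, w_{+k}}(m, n−k) holds, where for a sequence f, f_{+m} denotes the shifted sequence i ↦ f_{m+i}. -/
/-!
Induction on `m`. Applying the recurrence to the second factor `A^{v_{+l}, w_{+k}}(m + 1, n - k)`
of each term of the convolution produces the weight `v_{l+m} + w_{k + (n - k)} = v_{l+m} + w_n`,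
which does not depend on `k`. So the convolution obeys the same recurrence in `m` as
`A^{v,w}(l + m, n)`, and both start from `A^{v,w}(l, n)` at `m = 0`.
-/

open Finset

section

variable {K : Type*} [CommRing K]

lemma A_zero_left (v w : ℕ → K) (k : ℕ) : A v w 0 k = if k = 0 then 1 else 0 := by
  cases k <;> rfl

lemma A_succ_left (v w : ℕ → K) (n k : ℕ) :
    A v w (n + 1) k = (if k = 0 then 0 else A v w n (k - 1)) + (v n + w k) * A v w n k := by
  cases k <;> simp [A]

lemma sum_mul_A_zero_left (a : ℕ → K) (v w : ℕ → ℕ → K) (n : ℕ) :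
    ∑ k ∈ range (n + 1), a k * A (v k) (w k) 0 (n - k) = a n := by
  rw [sum_eq_single_of_mem n (self_mem_range_succ n)]
  · simp [A_zero_left]
  · intro k hk hkn
    simp [A_zero_left, show n - k ≠ 0 by grind]

lemma sum_mul_A_shift_succ (a : ℕ → K) (v w : ℕ → K) (m n : ℕ) :
    ∑ k ∈ range (n + 1), a k * A v (fun i => w (k + i)) (m + 1) (n - k) =
      (if n = 0 then 0 else ∑ k ∈ range n, a k * A v (fun i => w (k + i)) m (n - 1 - k)) +
        (v m + w n) * ∑ k ∈ range (n + 1), a k * A v (fun i => w (k + i)) m (n - k) := by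
  have step : ∀ k ∈ range (n + 1), a k * A v (fun i => w (k + i)) (m + 1) (n - k) =
      a k * (if n - k = 0 then 0 else A v (fun i => w (k + i)) m (n - k - 1)) +
        (v m + w n) * (a k * A v (fun i => w (k + i)) m (n - k)) := by
    intro k hk
    rw [A_succ_left, show k + (n - k) = n by grind]
    ring
  rw [sum_congr rfl step, sum_add_distrib, ← mul_sum]
  congr 1
  cases n with
  | zero => simp
  | succ n =>
    rw [sum_range_succ, Nat.sub_self, if_pos rfl, mul_zero, add_zero]
    refine sum_congr rfl fun k hk => ?_
    rw [if_neg (by grind), show n + 1 - k - 1 = n + 1 - 1 - k by grind]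

end

theorem stmt_5 {K : Type*} [CommRing K] (v w : ℕ → K) (l m n : ℕ) :
    A v w (l + m) n =
      ∑ k ∈ Finset.range (n + 1),
        A v w l k * A (fun i => v (l + i)) (fun i => w (k + i)) m (n - k) := by
  induction m generalizing n with
  | zero => exact (sum_mul_A_zero_left _ _ _ n).symm
  | succ m ih =>
    rw [← add_assoc, A_succ_left, sum_mul_A_shift_succ, ← ih]
    rcases n with _ | n
    · rfl
    · simp only [add_tsub_cancel_right, ← ih]
end
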